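/- For a = 1/2 or a = -1/2 and any integer n ≥ 2, the polynomial K_{a,n}(x) = x^n + (1-x)^n + a^n is irreducible over ℚ. -/

import Mathlib

/-!
Substituting `x = 1 / (2y)` and clearing denominators turns `K_{a,n}` into the integer polynomial
`S(y) = (2y - 1)^n + ε y^n + 1`, where `ε = (2a)^n = ±1`. Modulo 2, `S ≡ y^n`. For even `n`,
`S(0) = 2`, so `S` is Eisenstein at 2. For odd `n`, `S(0) = 0` and `S / y` is Eisenstein at 2,
its constant term being `S'(0) = 2n`. Reversal and rescaling preserve irreducibility, given
`K(0) ≠ 0`.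
-/

open Polynomial

namespace Polynomial

section Reflect

variable {R : Type*} [Semiring R]

theorem reflect_pow {f : R[X]} {N : ℕ} (hf : f.natDegree ≤ N) (k : ℕ) :
    reflect (N * k) (f ^ k) = reflect N f ^ k := by
  induction k with
  | zero => simp
  | succ k ih =>
    rw [pow_succ, pow_succ, Nat.mul_succ,
      reflect_mul _ _ ((natDegree_pow_le_of_le k hf).trans_eq (mul_comm k N)) hf, ih]

theorem reflect_eq_reverse_mul_X_pow {f : R[X]} {N : ℕ} (hf : f.natDegree ≤ N) :
    reflect N f = f.reverse * X ^ (N - f.natDegree) := by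
  have := reflect_mul f 1 le_rfl (natDegree_one.trans_le (Nat.zero_le (N - f.natDegree)))
  rwa [mul_one, Nat.add_sub_cancel' hf, reflect_one] at this

variable [NoZeroDivisors R]

noncomputable def mirrorMulEquiv : R[X] ≃* R[X] where
  toFun := mirror
  invFun := mirror
  left_inv := mirror_mirror
  right_inv := mirror_mirror
  map_mul' p q := mirror_mul_of_domain p q

theorem irreducible_mirror_iff {p : R[X]} : Irreducible p.mirror ↔ Irreducible p :=
  MulEquiv.irreducible_iff (mirrorMulEquiv (R := R))

theorem irreducible_of_irreducible_reverse {p : R[X]} (h0 : p.coeff 0 ≠ 0)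
    (h : Irreducible p.reverse) : Irreducible p := by
  rwa [← irreducible_mirror_iff, mirror, natTrailingDegree_eq_zero.mpr (.inr h0), pow_zero,
    mul_one]

end Reflect

theorem irreducible_comp_C_mul_X_iff {R : Type*} [CommRing R] {c : R} (hc : IsUnit c)
    {p : R[X]} : Irreducible (p.comp (C c * X)) ↔ Irreducible p := by
  let := hc.invertible
  simpa [comp_eq_aeval] using MulEquiv.irreducible_iff (algEquivCMulXAddC c 0).toMulEquiv (x := p)

theorem coeff_zero_comp_C_mul_X {R : Type*} [CommSemiring R] (p : R[X]) (c : R) :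
    (p.comp (C c * X)).coeff 0 = p.coeff 0 := by
  simp [coeff_zero_eq_eval_zero, eval_comp]

/-- Since `reflect N f = f.reverse * X ^ (N - deg f)`, comparing trailing degrees forces
`N - deg f = k`, and then `T` is a unit multiple of the rescaled reverse of `f`. -/
theorem irreducible_of_reflect_comp_eq_mul_X_pow {F : Type*} [Field F] {f T : F[X]} {N k : ℕ}
    {c : F} (hc : c ≠ 0) (hf : f.natDegree ≤ N) (hf0 : f.coeff 0 ≠ 0) (hT : Irreducible T)
    (hT0 : T.coeff 0 ≠ 0) (h : (reflect N f).comp (C c * X) = T * X ^ k) : Irreducible f := by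
  set R := f.reverse.comp (C c * X) * C (c ^ (N - f.natDegree))
  have hR0 : R.coeff 0 ≠ 0 := by
    have hf_ne : f ≠ 0 := fun h => hf0 (by simp [h])
    rw [coeff_mul_C, coeff_zero_comp_C_mul_X, coeff_zero_reverse]
    exact mul_ne_zero (leadingCoeff_ne_zero.mpr hf_ne) (pow_ne_zero _ hc)
  have hRT : R * X ^ (N - f.natDegree) = T * X ^ k := by
    rw [← h, reflect_eq_reverse_mul_X_pow hf, mul_comp, pow_comp, X_comp, mul_pow]
    simp only [R, C_pow]
    ring
  have hk : N - f.natDegree = k := by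
    have := congrArg natTrailingDegree hRT
    rwa [natTrailingDegree_mul_X_pow (fun h => hR0 (by simp [h])),
      natTrailingDegree_mul_X_pow hT.ne_zero, natTrailingDegree_eq_zero.mpr (.inr hR0),
      natTrailingDegree_eq_zero.mpr (.inr hT0), zero_add, zero_add] at this
  rw [hk] at hRT
  have hR : Irreducible R := (mul_left_injective₀ (pow_ne_zero k X_ne_zero) hRT) ▸ hT
  refine irreducible_of_irreducible_reverse hf0 ((irreducible_comp_C_mul_X_iff hc.isUnit).mp ?_)
  exact (irreducible_mul_isUnit (isUnit_C.mpr (pow_ne_zero _ hc).isUnit)).mp hR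

section Eisenstein

variable {R : Type*} [CommRing R] [NormalizedGCDMonoid R] {𝓟 : Ideal R} {f : R[X]}

theorem IsEisensteinAt.content_notMem (hf : f.IsEisensteinAt 𝓟) : f.content ∉ 𝓟 :=
  fun h => hf.leading (𝓟.mem_of_dvd (content_dvd_coeff _) h)

theorem IsEisensteinAt.primPart (hf : f.IsEisensteinAt 𝓟) (hP : 𝓟.IsPrime) :
    f.primPart.IsEisensteinAt 𝓟 := by
  have hcoeff (k : ℕ) : f.coeff k = f.content * f.primPart.coeff k := by
    conv_lhs => rw [eq_C_content_mul_primPart f]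
    exact coeff_C_mul _
  refine ⟨fun h => hf.leading ?_, fun {k} hk => ?_, fun h => hf.notMem ?_⟩
  · rw [leadingCoeff, ← natDegree_primPart f, hcoeff]
    exact 𝓟.mul_mem_left _ h
  · rw [natDegree_primPart] at hk
    have := hf.mem hk
    rw [hcoeff] at this
    exact (hP.mem_or_mem this).resolve_left hf.content_notMem
  · rw [hcoeff]
    exact (𝓟 ^ 2).mul_mem_left _ h

theorem IsEisensteinAt.irreducible_map [IsDomain R] {K : Type*} [Field K] [Algebra R K]
    [IsFractionRing R K] (hf : f.IsEisensteinAt 𝓟) (hP : 𝓟.IsPrime) (hdeg : 0 < f.natDegree) :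
    Irreducible (f.map (algebraMap R K)) := by
  have hprim : Irreducible (f.primPart.map (algebraMap R K)) :=
    (isPrimitive_primPart f).irreducible_iff_irreducible_map_fraction_map.mp
      ((hf.primPart hP).irreducible hP (isPrimitive_primPart f) (by rwa [natDegree_primPart]))
  have hc : IsUnit (C (algebraMap R K f.content)) := by
    refine isUnit_C.mpr (isUnit_iff_ne_zero.mpr ?_)
    refine (map_ne_zero_iff _ (IsFractionRing.injective R K)).mpr fun h => hf.content_notMem ?_
    rw [h]
    exact 𝓟.zero_mem
  rw [eq_C_content_mul_primPart f, Polynomial.map_mul, map_C]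
  exact (irreducible_isUnit_mul hc).mpr hprim

end Eisenstein

theorem natDegree_eq_of_map_eq_X_pow {R S : Type*} [Semiring R] [Semiring S] [Nontrivial S]
    {φ : R →+* S} {f : R[X]} {m : ℕ} (hdeg : f.natDegree ≤ m) (hmap : f.map φ = X ^ m) :
    f.natDegree = m :=
  hdeg.antisymm (by simpa [hmap] using natDegree_map_le (f := φ) (p := f))

theorem isEisensteinAt_of_map_zmod_eq_X_pow {p : ℕ} [Fact p.Prime] {f : ℤ[X]} {m : ℕ}
    (hdeg : f.natDegree ≤ m) (hmap : f.map (Int.castRingHom (ZMod p)) = X ^ m)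
    (h0 : ¬ (p : ℤ) ^ 2 ∣ f.coeff 0) : f.IsEisensteinAt (Ideal.span {(p : ℤ)}) := by
  have hcoeff (k : ℕ) : (f.coeff k : ZMod p) = if k = m then 1 else 0 := by
    rw [← coeff_X_pow, ← hmap, coeff_map, eq_intCast]
  have hm := natDegree_eq_of_map_eq_X_pow hdeg hmap
  refine ⟨?_, fun {k} hk => ?_, ?_⟩
  · rw [Ideal.mem_span_singleton, ← ZMod.intCast_zmod_eq_zero_iff_dvd, leadingCoeff, hm, hcoeff]
    simp
  · rw [Ideal.mem_span_singleton, ← ZMod.intCast_zmod_eq_zero_iff_dvd, hcoeff, if_neg (by omega)]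
  · rwa [Ideal.span_singleton_pow, Ideal.mem_span_singleton]

theorem irreducible_map_rat_of_map_zmod_eq_X_pow {p : ℕ} [hp : Fact p.Prime] {f : ℤ[X]} {m : ℕ}
    (hm : 0 < m) (hdeg : f.natDegree ≤ m) (hmap : f.map (Int.castRingHom (ZMod p)) = X ^ m)
    (h0 : ¬ (p : ℤ) ^ 2 ∣ f.coeff 0) : Irreducible (f.map (Int.castRingHom ℚ)) :=
  (isEisensteinAt_of_map_zmod_eq_X_pow hdeg hmap h0).irreducible_map (K := ℚ)
    ((Ideal.span_singleton_prime (by exact_mod_cast hp.out.ne_zero)).mpr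
      (Nat.prime_iff_prime_int.mp hp.out))
    ((natDegree_eq_of_map_eq_X_pow hdeg hmap).symm ▸ hm)

end Polynomial

/-- The polynomial `K_{a,n}`. -/
noncomputable def kPoly (a : ℚ) (n : ℕ) : ℚ[X] := X ^ n + (1 - X) ^ n + C (a ^ n)

theorem natDegree_kPoly_le (a : ℚ) (n : ℕ) : (kPoly a n).natDegree ≤ n := by
  unfold kPoly
  compute_degree

/-- With `ε = (2a)^n`, this is `(2y)^n K_{a,n}(1 / (2y))`. -/
noncomputable def kPolyReflect (n : ℕ) (ε : ℤ) : ℤ[X] := (C 2 * X - 1) ^ n + C ε * X ^ n + 1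

section KPolyReflect

variable (n : ℕ) (ε : ℤ)

theorem kPolyReflect_map_zmod_two (hε : Odd ε) :
    (kPolyReflect n ε).map (Int.castRingHom (ZMod 2)) = X ^ n := by
  have h2 : (Int.castRingHom (ZMod 2)) 2 = 0 := rfl
  have hε' : (Int.castRingHom (ZMod 2)) ε = 1 := by
    simpa [ZMod.intCast_eq_one_iff_odd] using hε
  simp only [kPolyReflect, Polynomial.map_add, Polynomial.map_pow, Polynomial.map_sub,
    Polynomial.map_mul, Polynomial.map_one, map_C, map_X, h2, hε', map_zero, map_one, zero_mul,
    zero_sub, one_mul, CharTwo.neg_eq, one_pow]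
  rw [add_comm, ← add_assoc, CharTwo.add_self_eq_zero, zero_add]

theorem natDegree_kPolyReflect_le : (kPolyReflect n ε).natDegree ≤ n := by
  unfold kPolyReflect
  compute_degree

theorem coeff_zero_kPolyReflect (hn : n ≠ 0) : (kPolyReflect n ε).coeff 0 = (-1) ^ n + 1 := by
  simp [kPolyReflect, coeff_zero_eq_eval_zero, hn]

theorem coeff_one_kPolyReflect (hn : 2 ≤ n) :
    (kPolyReflect n ε).coeff 1 = 2 * n * (-1) ^ (n - 1) := by
  have h := coeff_derivative (kPolyReflect n ε) 0
  simp only [coeff_zero_eq_eval_zero, CharP.cast_eq_zero, zero_add, mul_one] at h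
  rw [← h]
  simp only [kPolyReflect, derivative_add, derivative_pow, derivative_sub, derivative_mul,
    derivative_X, derivative_C, derivative_one, eval_add, eval_mul, eval_pow, eval_sub, eval_C,
    eval_X, eval_one, eval_zero, zero_pow (by omega : n - 1 ≠ 0)]
  ring

theorem irreducible_map_kPolyReflect_of_even (he : Even n) (hn : n ≠ 0) (hε : Odd ε) :
    Irreducible ((kPolyReflect n ε).map (Int.castRingHom ℚ)) := by
  refine irreducible_map_rat_of_map_zmod_eq_X_pow (p := 2) (Nat.pos_of_ne_zero hn)
    (natDegree_kPolyReflect_le n ε) (kPolyReflect_map_zmod_two n ε hε) ?_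
  rw [coeff_zero_kPolyReflect n ε hn, he.neg_one_pow]
  decide

theorem divX_kPolyReflect_mul_X (ho : Odd n) :
    (kPolyReflect n ε).divX * X = kPolyReflect n ε := by
  simpa [coeff_zero_kPolyReflect n ε ho.pos.ne', ho.neg_one_pow] using
    divX_mul_X_add (kPolyReflect n ε)

theorem irreducible_map_divX_kPolyReflect_of_odd (ho : Odd n) (hn : 2 ≤ n) (hε : Odd ε) :
    Irreducible ((kPolyReflect n ε).divX.map (Int.castRingHom ℚ)) := by
  refine irreducible_map_rat_of_map_zmod_eq_X_pow (p := 2) (m := n - 1) (by omega) ?_ ?_ ?_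
  · rw [natDegree_divX_eq_natDegree_tsub_one]
    exact Nat.sub_le_sub_right (natDegree_kPolyReflect_le n ε) 1
  · refine mul_right_cancel₀ X_ne_zero ?_
    rw [← Polynomial.map_X (Int.castRingHom (ZMod 2)), ← Polynomial.map_mul,
      divX_kPolyReflect_mul_X n ε ho, kPolyReflect_map_zmod_two n ε hε, Polynomial.map_X,
      ← pow_succ, Nat.sub_add_cancel (by omega)]
  · rw [coeff_divX, zero_add, coeff_one_kPolyReflect n ε hn,
      (Nat.Odd.sub_odd ho odd_one).neg_one_pow]
    obtain ⟨k, rfl⟩ := ho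
    omega

end KPolyReflect

section KPoly

variable {a : ℚ} {n : ℕ} {ε : ℤ}

theorem reflect_kPoly_comp (hε : (ε : ℚ) = (2 * a) ^ n) :
    (reflect n (kPoly a n)).comp (C 2 * X) = (kPolyReflect n ε).map (Int.castRingHom ℚ) := by
  have h1 : reflect 1 (1 - X : ℚ[X]) = X - 1 := by
    rw [reflect_sub, reflect_one, ← pow_one X, reflect_monomial, revAt_le le_rfl]
    simp
  have h2 : reflect n ((1 - X : ℚ[X]) ^ n) = (X - 1) ^ n := by
    rw [← h1, ← reflect_pow (by compute_degree!), one_mul]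
  have hK : reflect n (kPoly a n) = 1 + (X - 1) ^ n + C (a ^ n) * X ^ n := by
    rw [kPoly, reflect_add, reflect_add, reflect_monomial, revAt_le le_rfl, Nat.sub_self,
      pow_zero, h2, reflect_C]
  have hS : (kPolyReflect n ε).map (Int.castRingHom ℚ)
      = (C 2 * X - 1) ^ n + C (ε : ℚ) * X ^ n + 1 := by
    simp [kPolyReflect, C_ofNat]
  rw [hK, hS, hε]
  simp only [add_comp, mul_comp, pow_comp, sub_comp, one_comp, X_comp, C_comp, mul_pow, C_mul,
    C_pow]
  ring

theorem coeff_zero_kPoly_ne_zero (hn : n ≠ 0) (hε : (ε : ℚ) = (2 * a) ^ n) (hodd : Odd ε) :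
    (kPoly a n).coeff 0 ≠ 0 := by
  have h : (2 : ℚ) ^ n * (kPoly a n).coeff 0 = ((2 ^ n + ε : ℤ) : ℚ) := by
    simp only [kPoly, coeff_zero_eq_eval_zero, eval_add, eval_pow, eval_X, eval_sub, eval_one,
      eval_C, zero_pow hn, sub_zero, one_pow, Int.cast_add, Int.cast_pow, Int.cast_ofNat, hε]
    ring
  have hne : (2 ^ n + ε : ℤ) ≠ 0 := by
    intro h0
    simpa [h0] using (Int.even_pow.mpr ⟨even_two, hn⟩).add_odd hodd
  exact right_ne_zero_of_mul (h.trans_ne (Int.cast_ne_zero.mpr hne))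

theorem irreducible_kPoly (hn : 2 ≤ n) (hε : (ε : ℚ) = (2 * a) ^ n) (hodd : Odd ε) :
    Irreducible (kPoly a n) := by
  have hK0 := coeff_zero_kPoly_ne_zero (by omega) hε hodd
  rcases Nat.even_or_odd n with he | ho
  · refine irreducible_of_reflect_comp_eq_mul_X_pow two_ne_zero (natDegree_kPoly_le a n) hK0
      (irreducible_map_kPolyReflect_of_even n ε he (by omega) hodd) ?_ (k := 0) ?_
    · rw [coeff_map, coeff_zero_kPolyReflect n ε (by omega), he.neg_one_pow]
      norm_num
    · rw [reflect_kPoly_comp hε, pow_zero, mul_one]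
  · refine irreducible_of_reflect_comp_eq_mul_X_pow two_ne_zero (natDegree_kPoly_le a n) hK0
      (irreducible_map_divX_kPolyReflect_of_odd n ε ho hn hodd) ?_ (k := 1) ?_
    · rw [coeff_map, coeff_divX, zero_add, coeff_one_kPolyReflect n ε hn,
        (Nat.Odd.sub_odd ho odd_one).neg_one_pow]
      norm_num
      omega
    · rw [reflect_kPoly_comp hε, pow_one, ← Polynomial.map_X (Int.castRingHom ℚ),
        ← Polynomial.map_mul, divX_kPolyReflect_mul_X n ε ho]

end KPoly

open Polynomial in
theorem stmt_13 (a : ℚ) (ha : a = 1 / 2 ∨ a = -(1 / 2)) (n : ℕ) (hn : 2 ≤ n) :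
    Irreducible (X ^ n + (1 - X) ^ n + C (a ^ n) : ℚ[X]) := by
  obtain ⟨ε, hε, hodd⟩ : ∃ ε : ℤ, (ε : ℚ) = (2 * a) ^ n ∧ Odd ε := by
    rcases ha with rfl | rfl
    · exact ⟨1, by norm_num, odd_one⟩
    · exact ⟨(-1) ^ n, by norm_num, odd_one.neg.pow⟩
  exact irreducible_kPoly hn hε hodd
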